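/- Let n be even and 1 ≤ r ≤ n/2, and let k ∈ ℕ with 2k+1 ≤ n. Then there exists a k-admissible r-tuple (M₁,…,M_r) of perfect matchings of [n]². Explicitly, if σ is a cyclic permutation of the elements of [n/2], then taking M_j to be the perfect matching that matches each vertex (x,y) ∈ [n/2] × [n] to the vertex (n/2 + σ^{j−1}(x), y) yields such a k-admissible r-tuple: the matchings M₁,…,M_r are pairwise disjoint perfect matchings of [n]², and M₁ ∪ … ∪ M_r ∪ L(n,k) has no multiple edges. -/

import Mathlib

open Finset Filter

namespace Maj

variable {V : Type*}

/-- The set of neighbours of `v` under the adjacency relation `Adj`. -/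
def nbrSet (Adj : V → V → Prop) (v : V) : Set V := {u | Adj v u}

/-- One round of the `r`-majority bootstrap percolation process: an inactive vertex `v`
becomes active if at least `⌈(deg v + r)/2⌉` of its neighbours are active, i.e. if
`deg v + r ≤ 2 * #(active neighbours)`. -/
def majStep (Adj : V → V → Prop) (r : ℤ) (A : Set V) : Set V :=
  A ∪ {v | ((nbrSet Adj v).ncard : ℤ) + r ≤ 2 * ((nbrSet Adj v ∩ A).ncard : ℤ)}

/-- The final (stationary) state of `r`-majority bootstrap percolation started from `A`. -/
def majFinal (Adj : V → V → Prop) (r : ℤ) (A : Set V) : Set V :=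
  ⋃ s : ℕ, (majStep Adj r)^[s] A

/-- One round of ordinary bootstrap percolation with activation threshold `j`. -/
def bootStep (Adj : V → V → Prop) (j : ℕ) (A : Set V) : Set V :=
  A ∪ {v | j ≤ (nbrSet Adj v ∩ A).ncard}

/-- The final state of ordinary bootstrap percolation `B_j(G;A)`. -/
def bootFinal (Adj : V → V → Prop) (j : ℕ) (A : Set V) : Set V :=
  ⋃ s : ℕ, (bootStep Adj j)^[s] A

/-- The vertex set of the `j`-core of the subgraph induced on `U`: the largest `W ⊆ U`
such that every vertex of `W` has at least `j` neighbours in `W`. -/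
def coreSet (Adj : V → V → Prop) (j : ℤ) (U : Set V) : Set V :=
  ⋃₀ {W : Set V | W ⊆ U ∧ ∀ v ∈ W, j ≤ ((nbrSet Adj v ∩ W).ncard : ℤ)}

open scoped Classical in
/-- The probability that the random initial set (each vertex initially active with
probability `p`, independently) satisfies the event `E`. -/
noncomputable def initProb (V : Type*) [Fintype V] (p : ℝ) (E : Set V → Prop) : ℝ :=
  ∑ A : Finset V, if E ↑A then p ^ A.card * (1 - p) ^ (Fintype.card V - A.card) else 0

/-- The toroidal grid `[n]²`. -/
abbrev Torus (n : ℕ) := ZMod n × ZMod n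

/-- Adjacency in the graph `L(n,k)`: `v` is joined to `v + w` for
`w ∈ {-k,…,k} × {-1,1}`. -/
def LAdj (n k : ℕ) (u v : Torus n) : Prop :=
  ∃ a b : ℤ, a.natAbs ≤ k ∧ (b = 1 ∨ b = -1) ∧ v = u + ((a : ZMod n), (b : ZMod n))

/-- `initProb` on the torus `[n]²` (defined as `0` in the degenerate case `n = 0`). -/
noncomputable def torusProb (n : ℕ) (p : ℝ) (E : Set (Torus n) → Prop) : ℝ :=
  if h : n = 0 then 0 else
    haveI : NeZero n := ⟨h⟩
    initProb (Torus n) p E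

/-- A perfect matching of the vertex set, as a fixed-point-free involution. -/
def IsPerfectMatching (n : ℕ) (f : Torus n → Torus n) : Prop :=
  Function.Involutive f ∧ ∀ v, f v ≠ v

/-- A `k`-admissible `r`-tuple of perfect matchings of `[n]²`: the matchings are pairwise
disjoint and the union with `L(n,k)` has no multiple edges. -/
def Admissible (n k : ℕ) {r : ℕ} (M : Fin r → Torus n → Torus n) : Prop :=
  (∀ i, IsPerfectMatching n (M i)) ∧
  (∀ i j, i ≠ j → ∀ v, M i v ≠ M j v) ∧
  (∀ i v, ¬ LAdj n k v (M i v))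

/-- Adjacency in `L*(n,k,r) = M₁ ∪ ⋯ ∪ M_r ∪ L(n,k)`. -/
def LStarAdj (n k : ℕ) {r : ℕ} (M : Fin r → Torus n → Torus n) (u v : Torus n) : Prop :=
  LAdj n k u v ∨ ∃ i, M i u = v

open scoped Classical in
/-- The probability that `M_r(L*(n,k,r); p)` disseminates, where the `r` perfect matchings
are chosen uniformly at random among `k`-admissible `r`-tuples and each vertex is
initially active with probability `p`, independently. -/
noncomputable def starDissemProb (n k r : ℕ) (p : ℝ) : ℝ :=
  if h : n = 0 then 0 else
    haveI : NeZero n := ⟨h⟩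
    (∑ M ∈ Finset.univ.filter (fun M : Fin r → Torus n → Torus n => Admissible n k M),
        initProb (Torus n) p (fun A => majFinal (LStarAdj n k M) (r : ℤ) A = Set.univ)) /
      ((Finset.univ.filter (fun M : Fin r → Torus n → Torus n => Admissible n k M)).card : ℝ)

/-- The probability that a uniformly random `k`-admissible `r`-tuple of perfect matchings
of `[n]²` satisfies the event `E`. -/
noncomputable def admProb (n k r : ℕ) (E : (Fin r → Torus n → Torus n) → Prop) : ℝ :=
  (Nat.card {M : Fin r → Torus n → Torus n // Admissible n k M ∧ E M} : ℝ) /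
    (Nat.card {M : Fin r → Torus n → Torus n // Admissible n k M} : ℝ)

/-- `stepsLe Adj d u v`: `v` is reachable from `u` in at most `d` steps of `Adj`. -/
def stepsLe (Adj : V → V → Prop) : ℕ → V → V → Prop
  | 0, u, v => u = v
  | d + 1, u, v => stepsLe Adj d u v ∨ ∃ w, stepsLe Adj d u w ∧ Adj w v

/-- Graph distance with respect to the relation `Adj`. -/
noncomputable def relDist (Adj : V → V → Prop) (u v : V) : ℕ :=
  sInf {d | stepsLe Adj d u v}

/-- The diameter of a set `B` : the maximal `Adj`-graph distance between two of its points. -/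
noncomputable def setDiam (Adj : V → V → Prop) (B : Set V) : ℕ :=
  sSup {d | ∃ u ∈ B, ∃ v ∈ B, relDist Adj u v = d}

/-- `U` induces a connected subgraph with respect to `Adj`. -/
def ConnIn (Adj : V → V → Prop) (U : Set V) : Prop :=
  ∀ u ∈ U, ∀ v ∈ U, Relation.ReflTransGen (fun x y => x ∈ U ∧ y ∈ U ∧ Adj x y) u v

/-- The connected component of `x` inside `Z` (with respect to `Adj`). -/
def compOf (Adj : V → V → Prop) (Z : Set V) (x : V) : Set V :=
  {y | y ∈ Z ∧ Relation.ReflTransGen (fun a b => a ∈ Z ∧ b ∈ Z ∧ Adj a b) x y}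

/-- `B` is a connected component of the subgraph induced on `Z`. -/
def IsComponentOf (Adj : V → V → Prop) (Z B : Set V) : Prop :=
  ∃ x ∈ Z, B = compOf Adj Z x

/-- Adjacency in the toroidal square lattice `L₁(n)`. -/
def l1Adj (n : ℕ) (u v : Torus n) : Prop :=
  (u.1 = v.1 ∧ (v.2 = u.2 + 1 ∨ v.2 = u.2 - 1)) ∨
    (u.2 = v.2 ∧ (v.1 = u.1 + 1 ∨ v.1 = u.1 - 1))

/-- Adjacency in the toroidal lattice with diagonals `L∞(n)`. -/
def lInfAdj (n : ℕ) (u v : Torus n) : Prop :=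
  u ≠ v ∧ (v.1 = u.1 ∨ v.1 = u.1 + 1 ∨ v.1 = u.1 - 1) ∧
    (v.2 = u.2 ∨ v.2 = u.2 + 1 ∨ v.2 = u.2 - 1)

/-- Ceiling division: `cdiv k m = ⌈k/m⌉`. -/
def cdiv (k m : ℕ) : ℕ := (k + m - 1) / m

/-- The sequence `x_i` defining the set `S^k_m(a,b)`. -/
def xseq (k m a b i : ℕ) : ℕ :=
  if m ≤ i then b + (m + a + 1 - i) * k
  else b + (a + 1) * k + cdiv k m * ∑ j ∈ Finset.Ico i m, j

/-- The set `S^k_m(a,b) ⊆ ℤ²`: the union over `|i| ≤ m+a+1` of `[-x_i, x_i] × {i}`. -/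
def Scloud (k m a b : ℕ) : Set (ℤ × ℤ) :=
  {p | p.2.natAbs ≤ m + a + 1 ∧ p.1.natAbs ≤ xseq k m a b p.2.natAbs}

/-- Canonical projection `ℤ² → [n]²`. -/
def proj (n : ℕ) (p : ℤ × ℤ) : Torus n := ((p.1 : ZMod n), (p.2 : ZMod n))

/-- A vertex `v` is `m`-good (with respect to the active set `A`) if each of the four sets
`v ± {1,…,k} × {1}`, `v ± {1,…,k} × {-1}` contains at least `2⌈k/m⌉` active vertices. -/
def MGood (n k m : ℕ) (A : Set (Torus n)) (v : Torus n) : Prop :=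
  ∀ sx sy : ℤ, (sx = 1 ∨ sx = -1) → (sy = 1 ∨ sy = -1) →
    2 * cdiv k m ≤
      {u | u ∈ A ∧ ∃ a : ℤ, 1 ≤ a ∧ a ≤ (k : ℤ) ∧
        u = v + (((sx * a : ℤ) : ZMod n), ((sy : ℤ) : ZMod n))}.ncard

/-- Endpoints `a_i` of the `t`-tessellation: `a_i = i*t` for `i < ⌊n/t⌋` and `a_{⌊n/t⌋} = n`. -/
def cellEnd (n t i : ℕ) : ℕ := if i = n / t then n else i * t

/-- Cells of the `t`-tessellation `T(n,t)`, identified with `[⌊n/t⌋]²`. -/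
abbrev Cell (n t : ℕ) := Torus (n / t)

/-- The set of vertices of `[n]²` in the cell `c = (i,j)` of the `t`-tessellation:
`[a_i+1, a_{i+1}] × [a_j+1, a_{j+1}]`. -/
def cellSet (n t : ℕ) (c : Cell n t) : Set (Torus n) :=
  {v | ∃ x y : ℕ,
    c.1.val * t + 1 ≤ x ∧ x ≤ cellEnd n t (c.1.val + 1) ∧
    c.2.val * t + 1 ≤ y ∧ y ≤ cellEnd n t (c.2.val + 1) ∧
    v = ((x : ZMod n), (y : ZMod n))}

/-- A cell is `m`-good if every vertex inside it or within `ℓ₁`-distance `32mk²` of it is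
`m`-good or active. -/
def CellGood (n t k m : ℕ) (A : Set (Torus n)) (c : Cell n t) : Prop :=
  ∀ w : Torus n, (∃ v ∈ cellSet n t c, stepsLe (l1Adj n) (32 * m * k ^ 2) v w) →
    (MGood n k m A w ∨ w ∈ A)

/-- A cell is a seed if it contains an active translate of `S^k_m(0,0)`. -/
def IsSeed (n t k m : ℕ) (A : Set (Torus n)) (c : Cell n t) : Prop :=
  ∃ w : Torus n, ∀ p ∈ Scloud k m 0 0,
    w + proj n p ∈ A ∧ w + proj n p ∈ cellSet n t c

/-- `Z ⊆ [N]²` is `ε`-ubiquitous (with `A = 10⁸`). -/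
def Ubiquitous (N : ℕ) (ε : ℝ) (Z : Set (Torus N)) : Prop :=
  ConnIn (l1Adj N) Z ∧
  (1 - 10 ^ 8 * ε) * (N : ℝ) ^ 2 ≤ (Z.ncard : ℝ) ∧
  ∀ (j : ℕ) (B : Fin j → Set (Torus N)), 0 < j →
    (∀ i, (B i).Nonempty ∧ B i ⊆ Zᶜ ∧ ConnIn (lInfAdj N) (B i)) →
    Pairwise (Function.onFun Disjoint B) →
    ∃ i : Fin j, (setDiam (lInfAdj N) (B i) : ℝ) ≤
      10 ^ 8 / Real.log (1 / ε) * Real.log ((N : ℝ) ^ 2 / (j : ℝ))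

/-- A `2`-dependent site-percolation model on `[N]²`: the state of each cell `C` is
independent of the joint state of all cells at `ℓ₁`-distance at least `3` from `C`. -/
def TwoDependent (N : ℕ) (μ : PMF (Torus N → Bool)) : Prop :=
  ∀ (C : Torus N) (E : Set (Torus N → Bool)),
    (∀ ω ω' : Torus N → Bool,
      (∀ C' : Torus N, ¬ stepsLe (l1Adj N) 2 C C' → ω C' = ω' C') → (ω ∈ E ↔ ω' ∈ E)) →
    ∀ b : Bool,
      μ.toOuterMeasure {ω | ω C = b ∧ ω ∈ E} =
        μ.toOuterMeasure {ω | ω C = b} * μ.toOuterMeasure E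

/-- `B` is a largest `ℓ₁`-component of `Z`. -/
def IsLargestL1Component (N : ℕ) (Z B : Set (Torus N)) : Prop :=
  IsComponentOf (l1Adj N) Z B ∧
    ∀ B' : Set (Torus N), IsComponentOf (l1Adj N) Z B' → B'.ncard ≤ B.ncard

/-- Expectation of a real random variable under a `PMF`. -/
noncomputable def pmfExp {α : Type*} (μ : PMF α) (f : α → ℝ) : ℝ :=
  ∑' a, (μ a).toReal * f a

/-- `N_d`: the number of cells belonging to `ℓ∞`-components of the complement of `G₀`
of `ℓ∞`-diameter exactly `d`. -/
noncomputable def NdCount (N : ℕ) (G₀ : Set (Torus N)) (d : ℕ) : ℕ :=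
  {C : Torus N | ∃ B : Set (Torus N),
    IsComponentOf (lInfAdj N) G₀ᶜ B ∧ C ∈ B ∧ setDiam (lInfAdj N) B = d}.ncard

/-- `N'_d`: the number of cells belonging to `ℓ∞`-components of the complement of `G₀`
of `ℓ∞`-diameter at least `d`. -/
noncomputable def NdGeCount (N : ℕ) (G₀ : Set (Torus N)) (d : ℕ) : ℕ :=
  {C : Torus N | ∃ B : Set (Torus N),
    IsComponentOf (lInfAdj N) G₀ᶜ B ∧ C ∈ B ∧ d ≤ setDiam (lInfAdj N) B}.ncard

/-- A collection of sets of cells `B₁,…,B_s` is stable with respect to the tuple `M` of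
perfect matchings. -/
def StableColl (n t : ℕ) {r s : ℕ} (M : Fin r → Torus n → Torus n)
    (B : Fin s → Set (Cell n t)) : Prop :=
  ∀ j : Fin s, ∃ v : Fin 4 → Torus n, Function.Injective v ∧
    ∀ l : Fin 4, (∃ c ∈ B j, v l ∈ cellSet n t c) ∧
      ∃ i : Fin r, ∃ j' : Fin s, ∃ c ∈ B j', M i (v l) ∈ cellSet n t c

/-- Adjacency in the `m`-dimensional grid `[n]^m` (no wrap-around). -/
def gridAdj (n m : ℕ) (u v : Fin m → Fin n) : Prop :=
  ∃ i : Fin m, ((u i : ℕ) + 1 = (v i : ℕ) ∨ (v i : ℕ) + 1 = (u i : ℕ)) ∧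
    ∀ j : Fin m, j ≠ i → u j = v j

end Maj

open Maj

/-! Identify the horizontal coordinate `ZMod n` with two copies of `Fin (n / 2)`. Then `M_j`
swaps the two copies along `σ ^ j` and fixes the vertical coordinate. Powers `σ ^ i`, `i < n / 2`,
of a full cycle disagree at every point, so the matchings are disjoint; and every edge of
`L(n,k)` changes the vertical coordinate by `±1 ≠ 0`, so no matching edge lies in `L(n,k)`. -/

open Equiv

theorem Equiv.Perm.IsCycle.injOn_pow_apply {α : Type*} [Fintype α] [DecidableEq α] {σ : Perm α}
    (hσ : σ.IsCycle) (hfix : ∀ x, σ x ≠ x) (x : α) :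
    Set.InjOn (fun i : ℕ => (σ ^ i) x) (Set.Iio (Fintype.card α)) := by
  intro i hi j hj hij
  have hsupp : σ.support = Finset.univ :=
    Finset.eq_univ_of_forall fun y => Perm.mem_support.2 (hfix y)
  have horder : orderOf σ = Fintype.card α := by
    rw [hσ.orderOf, hsupp, Finset.card_univ]
  exact pow_injOn_Iio_orderOf (horder ▸ hi) (horder ▸ hj)
    (hσ.pow_eq_pow_iff.2 ⟨x, hfix x, hij⟩)

namespace Maj

section HalfSwap

variable {α : Type*}

def halfSwap (τ : Perm α) : Perm (α ⊕ α) := (τ.sumCongr τ⁻¹).trans (sumComm α α)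

@[simp]
lemma halfSwap_inl (τ : Perm α) (x : α) : halfSwap τ (.inl x) = .inr (τ x) := rfl

@[simp]
lemma halfSwap_inr (τ : Perm α) (x : α) : halfSwap τ (.inr x) = .inl (τ⁻¹ x) := rfl

lemma halfSwap_involutive (τ : Perm α) : Function.Involutive (halfSwap τ) := by
  rintro (x | x) <;> simp

lemma halfSwap_ne_self (τ : Perm α) (s : α ⊕ α) : halfSwap τ s ≠ s := by
  cases s <;> simp

lemma halfSwap_ne_halfSwap {τ τ' : Perm α} (h : ∀ x, τ x ≠ τ' x) (s : α ⊕ α) :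
    halfSwap τ s ≠ halfSwap τ' s := by
  rcases s with x | w
  · simpa using h x
  · simp only [halfSwap_inr, ne_eq, Sum.inl.injEq]
    intro hw
    apply h (τ⁻¹ w)
    conv_rhs => rw [hw]
    simp

end HalfSwap

section SwapMatching

variable {α : Type*} {n : ℕ}

def swapMatching (e : α ⊕ α ≃ ZMod n) (τ : Perm α) (v : Torus n) : Torus n :=
  (e (halfSwap τ (e.symm v.1)), v.2)

lemma isPerfectMatching_swapMatching (e : α ⊕ α ≃ ZMod n) (τ : Perm α) :
    IsPerfectMatching n (swapMatching e τ) := by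
  refine ⟨fun v => by simp [swapMatching, halfSwap_involutive τ _], fun v hv => ?_⟩
  apply halfSwap_ne_self τ (e.symm v.1)
  rw [e.eq_symm_apply]
  exact congrArg Prod.fst hv

lemma swapMatching_ne_swapMatching (e : α ⊕ α ≃ ZMod n) {τ τ' : Perm α}
    (h : ∀ x, τ x ≠ τ' x) (v : Torus n) : swapMatching e τ v ≠ swapMatching e τ' v :=
  fun hv => halfSwap_ne_halfSwap h _ (e.injective (congrArg Prod.fst hv))

lemma eq_swapMatching (e : α ⊕ α ≃ ZMod n) (τ : Perm α) {f : Torus n → Torus n}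
    (hf : ∀ x y, f (e (.inl x), y) = (e (.inr (τ x)), y) ∧
      f (e (.inr (τ x)), y) = (e (.inl x), y)) :
    f = swapMatching e τ := by
  funext ⟨z, y⟩
  obtain ⟨s, rfl⟩ := e.surjective z
  rcases s with x | w
  · simp [swapMatching, (hf x y).1]
  · obtain ⟨x, rfl⟩ := τ.surjective w
    simp [swapMatching, (hf x y).2]

end SwapMatching

lemma not_LAdj_of_snd_eq {n : ℕ} (hn : n ≠ 1) (k : ℕ) {u v : Torus n} (h : v.2 = u.2) :
    ¬ LAdj n k u v := by
  have : Nontrivial (ZMod n) := ZMod.nontrivial_iff.2 hn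
  rintro ⟨a, b, -, hb, rfl⟩
  have hb0 : ((b : ℤ) : ZMod n) = 0 := by simpa using h
  rcases hb with rfl | rfl <;> simp at hb0

lemma admissible_swapMatching {α : Type*} {n r : ℕ} (hn : n ≠ 1) (k : ℕ)
    (e : α ⊕ α ≃ ZMod n) {τ : Fin r → Perm α} (hτ : Pairwise fun i j => ∀ x, τ i x ≠ τ j x) :
    Admissible n k fun j => swapMatching e (τ j) :=
  ⟨fun j => isPerfectMatching_swapMatching e (τ j),
    fun _ _ hij => swapMatching_ne_swapMatching e (hτ hij),
    fun _ _ => not_LAdj_of_snd_eq hn k rfl⟩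

def halvesEquiv {h n : ℕ} [NeZero n] (hn : h + h = n) : Fin h ⊕ Fin h ≃ ZMod n :=
  finSumFinEquiv.trans
    { toFun := fun m => ((m : ℕ) : ZMod n)
      invFun := fun z => ⟨z.val, hn ▸ z.val_lt⟩
      left_inv := fun m => Fin.ext (ZMod.val_cast_of_lt (hn ▸ m.2))
      right_inv := ZMod.natCast_zmod_val }

@[simp]
lemma halvesEquiv_inl {h n : ℕ} [NeZero n] (hn : h + h = n) (x : Fin h) :
    halvesEquiv hn (.inl x) = ((x : ℕ) : ZMod n) := rfl

@[simp]
lemma halvesEquiv_inr {h n : ℕ} [NeZero n] (hn : h + h = n) (w : Fin h) :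
    halvesEquiv hn (.inr w) = ((h + w : ℕ) : ZMod n) := rfl

end Maj

theorem statement_19_general (n k r : ℕ) (hn : Even n) (hr2 : 2 * r ≤ n) :
    (∃ M : Fin r → Torus n → Torus n, Admissible n k M) ∧
    ∀ σ : Equiv.Perm (Fin (n / 2)),
      (σ.IsCycle ∧ ∀ x, σ x ≠ x) →
      ∀ M : Fin r → Torus n → Torus n,
        (∀ (j : Fin r) (x : Fin (n / 2)) (y : ZMod n),
          M j (((x : ℕ) : ZMod n), y) =
            (((n / 2 + (((σ ^ (j : ℕ)) x : Fin (n / 2)) : ℕ) : ℕ) : ZMod n), y) ∧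
          M j (((n / 2 + (((σ ^ (j : ℕ)) x : Fin (n / 2)) : ℕ) : ℕ) : ZMod n), y) =
            (((x : ℕ) : ZMod n), y)) →
        Admissible n k M := by
  obtain rfl | hr := r.eq_zero_or_pos
  · have h0 : ∀ M : Fin 0 → Torus n → Torus n, Admissible n k M :=
      fun _ => ⟨finZeroElim, finZeroElim, finZeroElim⟩
    exact ⟨⟨_, h0 (fun _ => id)⟩, fun _ _ M _ => h0 M⟩
  obtain ⟨c, rfl⟩ := hn
  have hn1 : c + c ≠ 1 := by omega
  have hhalf : (c + c) / 2 + (c + c) / 2 = c + c := by omega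
  have hrh : r ≤ (c + c) / 2 := by omega
  have : NeZero (c + c) := ⟨by omega⟩
  have : NeZero ((c + c) / 2) := ⟨by omega⟩
  refine ⟨⟨_, admissible_swapMatching hn1 k (halvesEquiv hhalf)
    (τ := fun i => Equiv.addRight (Fin.castLE hrh i))
    fun i j hij x hx => hij (Fin.castLE_injective hrh (add_left_cancel hx))⟩, ?_⟩
  rintro σ ⟨hcyc, hfix⟩ M hM
  obtain rfl : M = fun j : Fin r => swapMatching (halvesEquiv hhalf) (σ ^ (j : ℕ)) :=
    funext fun j => eq_swapMatching _ _ fun x y => by simpa using hM j x y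
  refine admissible_swapMatching hn1 k _ fun i j hij x hx => hij (Fin.ext ?_)
  simpa using hcyc.injOn_pow_apply hfix x (by simpa using i.2.trans_le hrh)
    (by simpa using j.2.trans_le hrh) hx

/-- For even `n`, `1 ≤ r ≤ n/2` and `2k+1 ≤ n`, `k`-admissible `r`-tuples
of perfect matchings of `[n]²` exist; explicitly, for any cyclic permutation `σ` of `[n/2]`,
matching each `(x,y) ∈ [n/2] × [n]` to `(n/2 + σ^{j-1}(x), y)` in the `j`-th matching gives
a `k`-admissible `r`-tuple. -/
theorem statement_19 (n k r : ℕ) (hn : Even n) (hr1 : 1 ≤ r) (hr2 : 2 * r ≤ n)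
    (hkn : 2 * k + 1 ≤ n) :
    (∃ M : Fin r → Torus n → Torus n, Admissible n k M) ∧
    ∀ σ : Equiv.Perm (Fin (n / 2)),
      (σ.IsCycle ∧ ∀ x, σ x ≠ x) →
      ∀ M : Fin r → Torus n → Torus n,
        (∀ (j : Fin r) (x : Fin (n / 2)) (y : ZMod n),
          M j (((x : ℕ) : ZMod n), y) =
            (((n / 2 + (((σ ^ (j : ℕ)) x : Fin (n / 2)) : ℕ) : ℕ) : ZMod n), y) ∧
          M j (((n / 2 + (((σ ^ (j : ℕ)) x : Fin (n / 2)) : ℕ) : ℕ) : ZMod n), y) =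
            (((x : ℕ) : ZMod n), y)) →
        Admissible n k M :=
  statement_19_general n k r hn hr2
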